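/- Let G, H be groupoids, and for i = 1, 2 let φᵢ : Kᵢ → G be fibrewise bijective groupoid homomorphisms and ψᵢ : Kᵢ → H groupoid homomorphisms with injective restriction to units. Then the following are equivalent: (i) there exists a map ι : K₁ → K₂ with φ₂ ∘ ι = φ₁ and ψ₂ ∘ ι = ψ₁; (ii) the image of φ₁ × ψ₁ is contained in the image of φ₂ × ψ₂ in G × H; (iii) for every subset U ⊆ G, ψ₁(φ₁⁻¹(U)) ⊆ ψ₂(φ₂⁻¹(U)). Moreover, the map ι in (i) is unique and is an injective groupoid homomorphism. -/
import Mathlib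


/-- A groupoid structure on the type `A` of arrows, following the definition with a
unit space `unit ⊆ A`, domain and range maps `d, r`, a multiplication (total function,
only constrained on composable pairs) and an inverse map. -/
structure Gpd (A : Type*) where
  unit : Set A
  d : A → A
  r : A → A
  mul : A → A → A
  inv : A → A
  d_mem : ∀ g, d g ∈ unit
  r_mem : ∀ g, r g ∈ unit
  d_unit : ∀ u ∈ unit, d u = u
  r_unit : ∀ u ∈ unit, r u = u
  left_unit : ∀ g, mul (r g) g = g
  right_unit : ∀ g, mul g (d g) = g
  r_mul : ∀ g' g, d g' = r g → r (mul g' g) = r g'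
  d_mul : ∀ g' g, d g' = r g → d (mul g' g) = d g
  mul_assoc : ∀ g'' g' g, d g'' = r g' → d g' = r g →
    mul g'' (mul g' g) = mul (mul g'' g') g
  d_inv : ∀ g, d (inv g) = r g
  r_inv : ∀ g, r (inv g) = d g
  mul_inv : ∀ g, mul g (inv g) = r g
  inv_mul : ∀ g, mul (inv g) g = d g

namespace Gpd

variable {A B C : Type*}

/-- The fiber `G_u` over a point `u`: arrows with domain `u`. -/
def fiber (G : Gpd A) (u : A) : Set A := {g | G.d g = u}

/-- The product `UV` of two subsets of a groupoid: products over composable pairs. -/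
def setMul (G : Gpd A) (U V : Set A) : Set A :=
  {g | ∃ u ∈ U, ∃ v ∈ V, G.d u = G.r v ∧ g = G.mul u v}

/-- The inverse `U⁻¹` of a subset of a groupoid. -/
def setInv (G : Gpd A) (U : Set A) : Set A := G.inv '' U

/-- A subset of a groupoid is a bisection if both `d` and `r` are injective on it. -/
def IsBisection (G : Gpd A) (U : Set A) : Prop :=
  Set.InjOn G.d U ∧ Set.InjOn G.r U

/-- A groupoid homomorphism: sends composable pairs to composable pairs and
preserves the multiplication. -/
def IsHom (K : Gpd A) (G : Gpd B) (φ : A → B) : Prop :=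
  ∀ g' g : A, K.d g' = K.r g →
    G.d (φ g') = G.r (φ g) ∧ φ (K.mul g' g) = G.mul (φ g') (φ g)

/-- Each fiber restriction `φ_u : K_u → G_{φ(u)}` is injective. -/
def FibInj (K : Gpd A) (φ : A → B) : Prop :=
  ∀ u ∈ K.unit, Set.InjOn φ (K.fiber u)

/-- Each fiber restriction `φ_u : K_u → G_{φ(u)}` is surjective. -/
def FibSurj (K : Gpd A) (G : Gpd B) (φ : A → B) : Prop :=
  ∀ u ∈ K.unit, ∀ h : B, G.d h = φ u → ∃ g ∈ K.fiber u, φ g = h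

/-- Fibrewise bijective groupoid homomorphism. -/
def FibBij (K : Gpd A) (G : Gpd B) (φ : A → B) : Prop :=
  FibInj K φ ∧ FibSurj K G φ

end Gpd

section Aux

variable {A B C : Type*}

/-- Right cancellation: if `a * b = a` then `b = d a`. -/
theorem Gpd.cancel_right (G : Gpd A) {a b : A} (h : G.d a = G.r b) (hm : G.mul a b = a) :
    b = G.d a := by
  have key : G.mul (G.d a) b = G.d a := by
    have h1 := G.mul_assoc (G.inv a) a b (G.d_inv a) h
    rw [G.inv_mul] at h1
    rw [← h1, hm, G.inv_mul]
  calc b = G.mul (G.r b) b := (G.left_unit b).symm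
    _ = G.mul (G.d a) b := by rw [h]
    _ = G.d a := key

/-- Left cancellation: if `b * a = a` then `b = r a`. -/
theorem Gpd.cancel_left (G : Gpd A) {a b : A} (h : G.d b = G.r a) (hm : G.mul b a = a) :
    b = G.r a := by
  have key : G.mul b (G.r a) = G.r a := by
    have h1 := G.mul_assoc b a (G.inv a) h (G.r_inv a).symm
    rw [hm, G.mul_inv] at h1
    exact h1
  calc b = G.mul b (G.d b) := (G.right_unit b).symm
    _ = G.mul b (G.r a) := by rw [h]
    _ = G.r a := key

/-- A groupoid homomorphism preserves the domain map. -/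
theorem Gpd.hom_d (K : Gpd A) (G : Gpd B) {φ : A → B} (hφ : Gpd.IsHom K G φ) (g : A) :
    φ (K.d g) = G.d (φ g) := by
  have hc : K.d g = K.r (K.d g) := (K.r_unit _ (K.d_mem g)).symm
  obtain ⟨h1, h2⟩ := hφ g (K.d g) hc
  rw [K.right_unit] at h2
  exact G.cancel_right h1 h2.symm

/-- A groupoid homomorphism preserves the range map. -/
theorem Gpd.hom_r (K : Gpd A) (G : Gpd B) {φ : A → B} (hφ : Gpd.IsHom K G φ) (g : A) :
    φ (K.r g) = G.r (φ g) := by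
  have hc : K.d (K.r g) = K.r g := K.d_unit _ (K.r_mem g)
  obtain ⟨h1, h2⟩ := hφ (K.r g) g hc
  rw [K.left_unit] at h2
  exact G.cancel_left h1 h2.symm

/-- If `φ` is fibrewise injective and `ψ` is a homomorphism injective on units, then the
pair `(φ, ψ)` is injective. -/
theorem Gpd.pair_inj (K : Gpd A) (G : Gpd B) (H : Gpd C) {φ : A → B} {ψ : A → C}
    (hfi : Gpd.FibInj K φ) (hψ : Gpd.IsHom K H ψ) (hinj : Set.InjOn ψ K.unit) :
    ∀ a b : A, φ a = φ b → ψ a = ψ b → a = b := by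
  intro a b hφab hψab
  have hd : K.d a = K.d b := by
    apply hinj (K.d_mem a) (K.d_mem b)
    rw [K.hom_d H hψ, K.hom_d H hψ, hψab]
  exact hfi (K.d a) (K.d_mem a) (show K.d a = K.d a from rfl)
    (show K.d b = K.d a from hd.symm) hφab

end Aux

/-- For `i = 1,2`, let `φᵢ : Kᵢ → G` be fibrewise bijective groupoid homomorphisms and
`ψᵢ : Kᵢ → H` groupoid homomorphisms injective on units. Then the existence of a map
`ι : K₁ → K₂` with `φ₂ ∘ ι = φ₁` and `ψ₂ ∘ ι = ψ₁` is equivalent to the inclusion of the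
image of `φ₁ × ψ₁` in that of `φ₂ × ψ₂`, and to `ψ₁(φ₁⁻¹(U)) ⊆ ψ₂(φ₂⁻¹(U))` for all
`U ⊆ G`; moreover such `ι` is unique and is an injective groupoid homomorphism. -/
theorem couple_factorization {A1 A2 B C : Type*} (K1 : Gpd A1) (K2 : Gpd A2)
    (G : Gpd B) (H : Gpd C)
    (φ1 : A1 → B) (ψ1 : A1 → C) (φ2 : A2 → B) (ψ2 : A2 → C)
    (hφ1 : Gpd.IsHom K1 G φ1) (hfb1 : Gpd.FibBij K1 G φ1)
    (hψ1 : Gpd.IsHom K1 H ψ1) (hinj1 : Set.InjOn ψ1 K1.unit)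
    (hφ2 : Gpd.IsHom K2 G φ2) (hfb2 : Gpd.FibBij K2 G φ2)
    (hψ2 : Gpd.IsHom K2 H ψ2) (hinj2 : Set.InjOn ψ2 K2.unit) :
    ((∃ ι : A1 → A2, φ2 ∘ ι = φ1 ∧ ψ2 ∘ ι = ψ1) ↔
      Set.range (fun k => (φ1 k, ψ1 k)) ⊆ Set.range (fun k => (φ2 k, ψ2 k))) ∧
    ((∃ ι : A1 → A2, φ2 ∘ ι = φ1 ∧ ψ2 ∘ ι = ψ1) ↔
      ∀ U : Set B, ψ1 '' (φ1 ⁻¹' U) ⊆ ψ2 '' (φ2 ⁻¹' U)) ∧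
    (∀ ι : A1 → A2, φ2 ∘ ι = φ1 → ψ2 ∘ ι = ψ1 →
      Gpd.IsHom K1 K2 ι ∧ Function.Injective ι ∧
      ∀ ι' : A1 → A2, φ2 ∘ ι' = φ1 → ψ2 ∘ ι' = ψ1 → ι' = ι) := by
  have pairinj1 := Gpd.pair_inj K1 G H hfb1.1 hψ1 hinj1
  have pairinj2 := Gpd.pair_inj K2 G H hfb2.1 hψ2 hinj2
  -- (i) → (ii)
  have h12 : (∃ ι : A1 → A2, φ2 ∘ ι = φ1 ∧ ψ2 ∘ ι = ψ1) →
      Set.range (fun k => (φ1 k, ψ1 k)) ⊆ Set.range (fun k => (φ2 k, ψ2 k)) := by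
    rintro ⟨ι, h1, h2⟩ p ⟨k, rfl⟩
    exact ⟨ι k, Prod.ext (congrFun h1 k) (congrFun h2 k)⟩
  -- (ii) → (i)
  have h21 : Set.range (fun k => (φ1 k, ψ1 k)) ⊆ Set.range (fun k => (φ2 k, ψ2 k)) →
      (∃ ι : A1 → A2, φ2 ∘ ι = φ1 ∧ ψ2 ∘ ι = ψ1) := by
    intro h
    have : ∀ k : A1, ∃ k2 : A2, φ2 k2 = φ1 k ∧ ψ2 k2 = ψ1 k := by
      intro k
      obtain ⟨k2, hk2⟩ := h ⟨k, rfl⟩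
      exact ⟨k2, congrArg Prod.fst hk2, congrArg Prod.snd hk2⟩
    choose ι hι1 hι2 using this
    exact ⟨ι, funext hι1, funext hι2⟩
  -- (i) → (iii)
  have h13 : (∃ ι : A1 → A2, φ2 ∘ ι = φ1 ∧ ψ2 ∘ ι = ψ1) →
      ∀ U : Set B, ψ1 '' (φ1 ⁻¹' U) ⊆ ψ2 '' (φ2 ⁻¹' U) := by
    rintro ⟨ι, h1, h2⟩ U c ⟨k, hk, rfl⟩
    have e1 : φ2 (ι k) = φ1 k := congrFun h1 k
    exact ⟨ι k, show φ2 (ι k) ∈ U from e1.symm ▸ hk, congrFun h2 k⟩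
  -- (iii) → (i)
  have h31 : (∀ U : Set B, ψ1 '' (φ1 ⁻¹' U) ⊆ ψ2 '' (φ2 ⁻¹' U)) →
      (∃ ι : A1 → A2, φ2 ∘ ι = φ1 ∧ ψ2 ∘ ι = ψ1) := by
    intro h
    apply h21
    rintro p ⟨k, rfl⟩
    obtain ⟨k2, hk2, hψ⟩ := h {φ1 k} ⟨k, rfl, rfl⟩
    exact ⟨k2, Prod.ext hk2 hψ⟩
  refine ⟨⟨h12, h21⟩, ⟨h13, h31⟩, ?_⟩
  intro ι h1 h2
  have e1 : ∀ k, φ2 (ι k) = φ1 k := fun k => congrFun h1 k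
  have e2 : ∀ k, ψ2 (ι k) = ψ1 k := fun k => congrFun h2 k
  refine ⟨?_, ?_, ?_⟩
  · -- ι is a homomorphism
    intro g' g hc
    have hcomp : K2.d (ι g') = K2.r (ι g) := by
      apply hinj2 (K2.d_mem _) (K2.r_mem _)
      rw [K2.hom_d H hψ2, K2.hom_r H hψ2, e2 g', e2 g]
      exact (hψ1 g' g hc).1
    refine ⟨hcomp, ?_⟩
    apply pairinj2
    · rw [e1 (K1.mul g' g), (hφ1 g' g hc).2, (hφ2 _ _ hcomp).2, e1 g', e1 g]
    · rw [e2 (K1.mul g' g), (hψ1 g' g hc).2, (hψ2 _ _ hcomp).2, e2 g', e2 g]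
  · -- ι is injective
    intro a b hab
    apply pairinj1
    · rw [← e1 a, ← e1 b, hab]
    · rw [← e2 a, ← e2 b, hab]
  · -- uniqueness
    intro ι' h1' h2'
    have e1' : ∀ k, φ2 (ι' k) = φ1 k := fun k => congrFun h1' k
    have e2' : ∀ k, ψ2 (ι' k) = ψ1 k := fun k => congrFun h2' k
    funext k
    apply pairinj2
    · rw [e1 k, e1' k]
    · rw [e2 k, e2' k]
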